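/- Let u = e_{i_k}e_{i_{k-1}}⋯e_{i_1} be a primitive cycle of length k in a directed graph G and let λ be a complex number of modulus 1. On ℂ^k with orthonormal basis h_1,…,h_k (and with the convention h_{k+1} := λh_1), define φ_{u,λ}(x) = Σ_{j : s(e_{i_j})=x} h_j h_j* for each vertex x ∈ V(G) and φ_{u,λ}(e) = (1/2) Σ_{j : e_{i_j}=e} h_{j+1} h_j* for each edge e ∈ E(G) (so φ_{u,λ}(e) = 0 for edges not appearing in u). Then the representation φ_{u,λ} is irreducible: the algebra generated by {φ_{u,λ}(x) : x ∈ V(G)} ∪ {φ_{u,λ}(e) : e ∈ E(G)} is all of M_k(ℂ). -/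

import Mathlib

noncomputable section

/-! ## Countable directed graphs and their path spaces -/

/-- A countable directed graph: countable sets of vertices and edges together
with source and range maps. -/
structure DGraph : Type 1 where
  V : Type
  E : Type
  countV : Countable V
  countE : Countable E
  src : E → V
  rng : E → V

namespace DGraph

variable (G : DGraph)

instance : Countable G.V := G.countV
instance : Countable G.E := G.countE

/-- A path of positive length is a nonempty list of edges `[e_k, …, e_1]`
(written right to left) with `s(e_{i+1}) = r(e_i)`; a path of length zero is a vertex. -/
def Path : Type := G.V ⊕ {l : List G.E // l ≠ [] ∧ List.Chain' (fun a b => G.src a = G.rng b) l}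

instance : Countable G.Path := by
  unfold Path; infer_instance

/-- The source vertex of a path. -/
def psrc : G.Path → G.V
  | .inl x => x
  | .inr l => G.src (l.1.getLast l.2.1)

/-- The range vertex of a path. -/
def prng : G.Path → G.V
  | .inl x => x
  | .inr l => G.rng (l.1.head l.2.1)

/-- The product `p q` is defined exactly when `s(p) = r(q)`. -/
def Composable (p q : G.Path) : Prop := G.psrc p = G.prng q

/-- Composition of composable paths (`pcomp p q _` is the path "first `q`, then `p`"). -/
def pcomp : (p q : G.Path) → G.Composable p q → G.Path
  | .inl _, q, _ => q
  | .inr l, .inl _, _ => .inr l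
  | .inr l, .inr m, h => .inr ⟨l.1 ++ m.1, by
      refine ⟨by simp [l.2.1], l.2.2.append m.2.2 ?_⟩
      intro a ha b hb
      rw [List.getLast?_eq_getLast_of_ne_nil l.2.1, Option.mem_some_iff] at ha
      rw [List.head?_eq_head m.2.1, Option.mem_some_iff] at hb
      subst ha; subst hb
      exact h⟩

/-- The length of a path. -/
def plen : G.Path → ℕ
  | .inl _ => 0
  | .inr l => l.1.length

/-- The list of edges of a path (ordered from last edge traversed to first). -/
def pedges : G.Path → List G.E
  | .inl _ => []
  | .inr l => l.1

/-- A vertex regarded as a path of length zero. -/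
def vpath (x : G.V) : G.Path := .inl x

/-- An edge regarded as a path of length one. -/
def epath (e : G.E) : G.Path := .inr ⟨[e], by simp; first | exact List.IsChain.singleton e | exact List.chain'_singleton e | constructor⟩

/-- There is a directed path from `x` to `y`. -/
def Reach (x y : G.V) : Prop := ∃ p : G.Path, G.psrc p = x ∧ G.prng p = y

/-- `x` and `y` are adjacent in the underlying undirected graph. -/
def UAdj (x y : G.V) : Prop :=
  ∃ e : G.E, (G.src e = x ∧ G.rng e = y) ∨ (G.src e = y ∧ G.rng e = x)

/-- `x` and `y` lie in the same connected component of the underlying undirected graph. -/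
def SameUComp : G.V → G.V → Prop := Relation.ReflTransGen G.UAdj

/-- `G` is transitive in each component: any two vertices in the same connected component
of the underlying undirected graph are joined by a directed path. -/
def TransitiveInComponents : Prop := ∀ x y : G.V, G.SameUComp x y → G.Reach x y

/-- `x` and `y` are mutually reachable, i.e. lie in the same transitive component. -/
def MutReach (x y : G.V) : Prop := G.Reach x y ∧ G.Reach y x

/-- The vertex `x` supports a loop edge. -/
def HasLoop (x : G.V) : Prop := ∃ e : G.E, G.src e = x ∧ G.rng e = x

/-- The vertex `x` supports a cycle (a path of positive length from `x` to `x`). -/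
def OnCycle (x : G.V) : Prop := ∃ p : G.Path, 0 < G.plen p ∧ G.psrc p = x ∧ G.prng p = x

end DGraph

/-- The image of a vertex `x` under the representation `φ_{u,λ}` attached to a cycle
`u = e_{i_k} ⋯ e_{i_1}` (here `u j = e_{i_{j+1}}` for `j : Fin k`):
`φ_{u,λ}(x) = Σ_{j : s(e_{i_j}) = x} h_j h_j*`. -/
noncomputable def phiV (G : DGraph) {k : ℕ} (u : Fin k → G.E) (x : G.V) :
    Matrix (Fin k) (Fin k) ℂ :=
  Matrix.of fun a b =>
    haveI := Classical.propDecidable (a = b ∧ G.src (u a) = x)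
    if a = b ∧ G.src (u a) = x then 1 else 0

/-- The image of an edge `e` under the representation `φ_{u,λ}`:
`φ_{u,λ}(e) = (1/2) Σ_{j : e_{i_j} = e} h_{j+1} h_j*`, with the convention `h_{k+1} = λ h_1`
(so the wrap-around entry carries the coefficient `λ/2`). -/
noncomputable def phiE (G : DGraph) {k : ℕ} [NeZero k] (u : Fin k → G.E) (lam : ℂ)
    (e : G.E) : Matrix (Fin k) (Fin k) ℂ :=
  Matrix.of fun a b =>
    haveI := Classical.propDecidable (u b = e ∧ a = b + 1)
    if u b = e ∧ a = b + 1 then (if (b : ℕ) + 1 = k then lam / 2 else 1 / 2) else 0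

/-!
Reading the cycle once round from position `j`, the product `φ(u_{j+k-1}) ⋯ φ(u_j)` has a
nonzero `(a, b)` entry only if `a = b` and the cycle read from `b` agrees edge by edge with the
cycle read from `j`; then `b - j` is a period of `u`, so primitivity forces `b = j` and the
product is a nonzero multiple of the diagonal unit `E_jj` (the weights `1/2` and `λ/2` do not
vanish). Compressing `φ(u_b)` between `E_{b+1,b+1}` and `E_{bb}` yields `E_{b+1,b}`, and
products of these shift units give every matrix unit. So the edges alone generate `M_k(ℂ)`.
-/

section Periodic

open Function Fin.CommRing

variable {α : Type*} {k : ℕ} [NeZero k] {f : Fin k → α}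

theorem Function.Periodic.natCast_gcd_val {d : Fin k} (h : Periodic f d) :
    Periodic f ((Nat.gcd d k : ℕ) : Fin k) := by
  have hbezout : ((Nat.gcd d k : ℕ) : Fin k) = (Nat.gcdA d k : ℤ) • d := by
    have := congrArg (fun z : ℤ => (z : Fin k)) (Nat.gcd_eq_gcd_ab d k)
    push_cast at this
    rw [this, Fin.natCast_self, zsmul_eq_mul]
    ring
  rw [hbezout]
  exact h.zsmul _

theorem Fin.exists_dvd_periodic {d : Fin k} (h : Periodic f d) (hd : d ≠ 0) :
    ∃ m : ℕ, 0 < m ∧ m < k ∧ m ∣ k ∧ Periodic f (m : Fin k) := by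
  have hpos : 0 < (d : ℕ) := Nat.pos_of_ne_zero (Fin.val_ne_zero_iff.2 hd)
  exact ⟨Nat.gcd d k, Nat.gcd_pos_of_pos_left _ hpos, (Nat.gcd_le_left _ hpos).trans_lt d.isLt,
    Nat.gcd_dvd_right _ _, h.natCast_gcd_val⟩

theorem Fin.eq_of_forall_apply_add_eq
    (hprim : ¬ ∃ m : ℕ, 0 < m ∧ m < k ∧ m ∣ k ∧
        ∀ j : Fin k, f (j + ⟨m % k, Nat.mod_lt m (Nat.pos_of_neZero k)⟩) = f j)
    {a b : Fin k} (h : ∀ c, f (a + c) = f (b + c)) : a = b := by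
  by_contra hne
  have hper : Periodic f (a - b) := fun c => by
    rw [show c + (a - b) = a + (c - b) by abel, h, add_sub_cancel]
  obtain ⟨m, hm0, hmk, hmdvd, hm⟩ := Fin.exists_dvd_periodic hper (sub_ne_zero.2 hne)
  have hcast : (⟨m % k, Nat.mod_lt m (Nat.pos_of_neZero k)⟩ : Fin k) = m :=
    Fin.ext (Fin.val_natCast m k).symm
  exact hprim ⟨m, hm0, hmk, hmdvd, fun j => by rw [hcast, hm j]⟩

end Periodic

namespace Matrix

theorem subalgebra_eq_top_of_single_mem {R n : Type*} [CommSemiring R] [Fintype n]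
    [DecidableEq n] (A : Subalgebra R (Matrix n n R)) (h : ∀ i j, single i j (1 : R) ∈ A) :
    A = ⊤ := by
  refine eq_top_iff.2 fun M _ => ?_
  rw [M.matrix_eq_sum_single]
  refine sum_mem fun i _ => sum_mem fun j _ => ?_
  simpa [smul_single] using A.smul_mem (h i j) (M i j)

open Fin.CommRing in
/-- `E_{b+n,b} = E_{b+n,b+n-1} ⋯ E_{b+1,b}` runs through all matrix units. -/
theorem subalgebra_eq_top_of_single_add_one_mem {R : Type*} [CommSemiring R] {k : ℕ} [NeZero k]
    (A : Subalgebra R (Matrix (Fin k) (Fin k) R))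
    (h : ∀ b : Fin k, single (b + 1) b (1 : R) ∈ A) :
    A = ⊤ := by
  have hshift : ∀ (n : ℕ) (b : Fin k), single (b + (n + 1 : ℕ)) b (1 : R) ∈ A := by
    intro n
    induction n with
    | zero => simpa using h
    | succ n ih =>
      intro b
      have hprod : single (b + (n + 1 : ℕ) + 1) (b + (n + 1 : ℕ)) (1 : R) *
          single (b + (n + 1 : ℕ)) b 1 = single (b + (n + 1 + 1 : ℕ)) b 1 := by
        rw [single_mul_single_same, one_mul]
        push_cast
        ring_nf
      exact hprod ▸ mul_mem (h _) (ih b)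
  refine subalgebra_eq_top_of_single_mem A fun a b => ?_
  have hab : b + ((a - b - 1 : Fin k) + 1 : ℕ) = a := by
    push_cast
    ring
  exact hab ▸ hshift _ b

end Matrix

section Representation

open Matrix Finset Fin.CommRing
open scoped Classical

variable {k : ℕ}

def shiftWeight (lam : ℂ) (b : Fin k) : ℂ := if (b : ℕ) + 1 = k then lam / 2 else 1 / 2

theorem shiftWeight_ne_zero {lam : ℂ} (hlam : lam ≠ 0) (b : Fin k) :
    shiftWeight lam b ≠ 0 := by
  unfold shiftWeight
  split_ifs <;> simp [hlam]

variable (G : DGraph) [NeZero k] (u : Fin k → G.E) (lam : ℂ)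

theorem phiE_apply (e : G.E) (a b : Fin k) :
    phiE G u lam e a b = if u b = e ∧ a = b + 1 then shiftWeight lam b else 0 := by
  simp only [phiE, shiftWeight, of_apply]
  congr 1

/-- `phiEPath G u lam j m = φ_{u,λ}(u (j + m - 1) ⋯ u (j + 1) u j)`, the image of the
length-`m` subpath of the cycle starting at position `j`. -/
def phiEPath (j : Fin k) : ℕ → Matrix (Fin k) (Fin k) ℂ
  | 0 => 1
  | m + 1 => phiE G u lam (u (j + m)) * phiEPath j m

theorem phiEPath_apply (j : Fin k) (m : ℕ) (a b : Fin k) :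
    phiEPath G u lam j m a b =
      if a = b + (m : Fin k) ∧ ∀ i < m, u (b + (i : Fin k)) = u (j + (i : Fin k))
      then ∏ i ∈ range m, shiftWeight lam (b + (i : Fin k)) else 0 := by
  induction m generalizing a with
  | zero => simp [phiEPath, one_apply]
  | succ m ih =>
    rw [phiEPath, mul_apply, sum_eq_single (b + (m : Fin k)) (fun c _ hc => by simp [ih, hc])
      (by simp), ih, phiE_apply]
    simp only [Nat.forall_lt_succ_right, prod_range_succ, true_and, Nat.cast_succ, ← add_assoc]
    split_ifs <;> first | tauto | ring

theorem phiEPath_length_eq_smul_single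
    (hprim : ¬ ∃ m : ℕ, 0 < m ∧ m < k ∧ m ∣ k ∧
        ∀ j : Fin k, u (j + ⟨m % k, Nat.mod_lt m (Nat.pos_of_neZero k)⟩) = u j)
    (j : Fin k) :
    phiEPath G u lam j k =
      (∏ i ∈ range k, shiftWeight lam (j + (i : Fin k))) • single j j 1 := by
  have hsame_walk (b : Fin k) :
      (∀ i < k, u (b + (i : Fin k)) = u (j + (i : Fin k))) ↔ b = j :=
    ⟨fun h => Fin.eq_of_forall_apply_add_eq hprim fun c => by simpa using h c c.isLt,
      fun h _ _ => h ▸ rfl⟩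
  ext a b
  simp only [phiEPath_apply, Fin.natCast_self, add_zero, hsame_walk]
  by_cases ha : a = j <;> by_cases hb : b = j <;> simp [single, ha, hb, eq_comm (a := j)]

theorem subalgebra_eq_top_of_phiE_mem
    (hprim : ¬ ∃ m : ℕ, 0 < m ∧ m < k ∧ m ∣ k ∧
        ∀ j : Fin k, u (j + ⟨m % k, Nat.mod_lt m (Nat.pos_of_neZero k)⟩) = u j)
    (hlam : lam ≠ 0) (A : Subalgebra ℂ (Matrix (Fin k) (Fin k) ℂ))
    (hA : ∀ e, phiE G u lam e ∈ A) : A = ⊤ := by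
  have hpath (j : Fin k) (m : ℕ) : phiEPath G u lam j m ∈ A := by
    induction m with
    | zero => exact one_mem A
    | succ m ih => exact mul_mem (hA _) ih
  have hdiag (j : Fin k) : single j j (1 : ℂ) ∈ A := by
    have hc := prod_ne_zero_iff.2 fun i (_ : i ∈ range k) =>
      shiftWeight_ne_zero hlam (j + (i : Fin k))
    simpa [phiEPath_length_eq_smul_single G u lam hprim, smul_smul, inv_mul_cancel₀ hc]
      using A.smul_mem (hpath j k) (∏ i ∈ range k, shiftWeight lam (j + (i : Fin k)))⁻¹
  refine subalgebra_eq_top_of_single_add_one_mem A fun b => ?_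
  simpa [phiE_apply, inv_mul_cancel₀ (shiftWeight_ne_zero hlam b)] using
    A.smul_mem (mul_mem (mul_mem (hdiag (b + 1)) (hA (u b))) (hdiag b)) (shiftWeight lam b)⁻¹

end Representation

theorem phi_u_lambda_irreducible_general (G : DGraph) (k : ℕ) [NeZero k] (u : Fin k → G.E)
    (hprimitive : ¬ ∃ m : ℕ, 0 < m ∧ m < k ∧ m ∣ k ∧
        ∀ j : Fin k, u (j + ⟨m % k, Nat.mod_lt m (Nat.pos_of_neZero k)⟩) = u j)
    (lam : ℂ) (hlam : ‖lam‖ = 1) :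
    Algebra.adjoin ℂ
        ((Set.range fun x : G.V => phiV G u x) ∪
          (Set.range fun e : G.E => phiE G u lam e)) = ⊤ :=
  subalgebra_eq_top_of_phiE_mem G u lam hprimitive (norm_ne_zero_iff.1 (hlam ▸ one_ne_zero)) _
    fun e => Algebra.subset_adjoin (Or.inr ⟨e, rfl⟩)

/-- **Lemma (Davidson–Katsoulis, Lemma 3).**
If `u` is a primitive cycle of length `k ≥ 1` in a directed graph `G` and `λ ∈ 𝕋`, then the
representation `φ_{u,λ}` is irreducible: the algebra generated by the images of the vertices
and the edges is all of `M_k(ℂ)`. -/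
theorem phi_u_lambda_irreducible (G : DGraph) (k : ℕ) [NeZero k] (u : Fin k → G.E)
    (hcycle : ∀ j : Fin k, G.rng (u j) = G.src (u (j + 1)))
    (hprimitive : ¬ ∃ m : ℕ, 0 < m ∧ m < k ∧ m ∣ k ∧
        ∀ j : Fin k, u (j + ⟨m % k, Nat.mod_lt m (Nat.pos_of_neZero k)⟩) = u j)
    (lam : ℂ) (hlam : ‖lam‖ = 1) :
    Algebra.adjoin ℂ
        ((Set.range fun x : G.V => phiV G u x) ∪
          (Set.range fun e : G.E => phiE G u lam e)) = ⊤ :=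
  phi_u_lambda_irreducible_general G k u hprimitive lam hlam
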